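/- Let G be a multigraph realizing degree sequence d with m_d light double-edges and no other non-simple edges, and fix a simple two-star v_1v_3v_5 in G. Then the number of light simple ordered two-stars in G that share no nodes with v_1v_3v_5 is at least L_2 - 8·m_d·d_h - 6·B_1 - 3·d_h², where B_1 = Σ_{i=1}^{d_1} d_{h+i}. -/

import Mathlib

open Finset

/-- A multigraph on `n` nodes, given by a symmetric multiplicity function.
`mult i i` is the multiplicity of the loop at `i`. -/
structure Multigraph (n : ℕ) where
  mult : Fin n → Fin n → ℕ
  symm : ∀ i j, mult i j = mult j i

namespace Multigraph

/-- The degree of a node: a loop counts twice. -/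
def deg {n : ℕ} (G : Multigraph n) (i : Fin n) : ℕ :=
  2 * G.mult i i + ∑ j ∈ Finset.univ.filter (fun j => j ≠ i), G.mult i j

/-- `i j` is a simple edge: non-loop of multiplicity exactly 1. -/
def Simple {n : ℕ} (G : Multigraph n) (i j : Fin n) : Prop :=
  i ≠ j ∧ G.mult i j = 1

instance {n : ℕ} (G : Multigraph n) (i j : Fin n) : Decidable (G.Simple i j) :=
  inferInstanceAs (Decidable (i ≠ j ∧ G.mult i j = 1))

end Multigraph

/-- The (0-indexed) degree sequence extended to all of `ℕ` by zero. -/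
def dExt (n : ℕ) (d : Fin n → ℕ) (i : ℕ) : ℕ :=
  if h : i < n then d ⟨i, h⟩ else 0

/-!
A light node `c` with `s` simple and `t` double neighbours has degree `s + 2t` and is the
centre of exactly `s(s-1)` simple ordered two-stars; since
`(s+2t)(s+2t-1) - s(s-1) ≤ 4t(s+2t) ≤ 4t·d_h` and the light ends of double edges number at
most `2 m_d`, there are at least `L_2 - 8 m_d d_h` light simple ordered two-stars. Those meeting
a given node `v` have `v` as centre (at most `d_h²` of them) or as a leaf. In the latter case
the centre is one of the at most `d_1` light neighbours of `v` and the other leaf one of its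
neighbours; as distinct light nodes have degrees bounded by `d_{h+1}, d_{h+2}, …` in turn,
there are at most `B_1` such two-stars for each choice of leaf position.
-/

lemma Finset.sum_le_sum_range_of_antitone {M : Type*} [AddCommMonoid M] [PartialOrder M]
    [IsOrderedAddMonoid M] {f : ℕ → M} (hf : Antitone f) {h : ℕ} (A : Finset ℕ)
    (hA : ∀ a ∈ A, h ≤ a) : ∑ a ∈ A, f a ≤ ∑ j ∈ range #A, f (h + j) := by
  induction A using Finset.induction_on_max with
  | empty => simp
  | insert a s hlt ih =>
    have has : a ∉ s := fun ha => lt_irrefl a (hlt a ha)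
    have hcard : #s ≤ a - h := by
      simpa using card_le_card (fun x hx => mem_Ico.2
        ⟨hA x (mem_insert_of_mem hx), hlt x hx⟩ : s ⊆ Ico h a)
    rw [sum_insert has, card_insert_of_notMem has, sum_range_succ, add_comm]
    exact add_le_add (ih fun x hx => hA x (mem_insert_of_mem hx))
      (hf (by have := hA a (mem_insert_self a s); omega))

lemma Nat.descFactorial_two_add_le (s t D : ℕ) (hD : s + 2 * t ≤ D) :
    (s + 2 * t).descFactorial 2 ≤ s * s - s + 4 * t * D := by
  rw [← Nat.sub_one_mul]
  simp only [Nat.descFactorial_succ, Nat.descFactorial_zero, Nat.sub_zero, mul_one]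
  rcases Nat.eq_zero_or_pos (s + 2 * t) with h0 | h0
  · simp [h0]
  rcases Nat.eq_zero_or_pos s with rfl | hs
  · zify [h0] at *
    nlinarith
  · zify [hs, h0] at *
    nlinarith

namespace Multigraph

variable {n : ℕ} (G : Multigraph n)

theorem Simple.symm {G : Multigraph n} {i j : Fin n} (hij : G.Simple i j) : G.Simple j i :=
  ⟨hij.1.symm, G.symm j i ▸ hij.2⟩

def simpleNbrs (c : Fin n) : Finset (Fin n) := univ.filter (G.Simple c)

def doubleNbrs (c : Fin n) : Finset (Fin n) := univ.filter (G.mult c · = 2)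

lemma card_simpleNbrs_le_deg (c : Fin n) : #(G.simpleNbrs c) ≤ G.deg c := by
  have hsub : G.simpleNbrs c ⊆ univ.filter (· ≠ c) := fun j hj => by
    simp only [simpleNbrs, Simple, mem_filter, mem_univ, true_and] at hj ⊢
    exact hj.1.symm
  calc #(G.simpleNbrs c) = ∑ j ∈ G.simpleNbrs c, G.mult c j :=
        (card_eq_sum_ones _).trans <| sum_congr rfl fun j hj => by
          simp only [simpleNbrs, Simple, mem_filter] at hj; exact hj.2.2.symm
    _ ≤ ∑ j ∈ univ.filter (· ≠ c), G.mult c j := sum_le_sum_of_subset hsub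
    _ ≤ G.deg c := Nat.le_add_left _ _

lemma deg_eq_card_simpleNbrs_add (c : Fin n) (hloop : G.mult c c = 0)
    (hmax : ∀ j, c ≠ j → G.mult c j ≤ 2) :
    G.deg c = #(G.simpleNbrs c) + 2 * #(G.doubleNbrs c) := by
  have key : ∀ j, (if j ≠ c then G.mult c j else 0) =
      (if G.Simple c j then 1 else 0) + 2 * (if G.mult c j = 2 then 1 else 0) := by
    intro j
    rcases eq_or_ne c j with rfl | hne
    · simp [Simple, hloop]
    · have := hmax j hne
      simp only [Simple, ne_eq, hne, not_false_eq_true, true_and, Ne.symm hne, if_true]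
      split_ifs <;> omega
  simp only [deg, hloop, simpleNbrs, doubleNbrs, card_filter, sum_filter, key, sum_add_distrib,
    mul_sum, mul_zero, zero_add]

lemma descFactorial_deg_le {c : Fin n} {D : ℕ} (hloop : G.mult c c = 0)
    (hmax : ∀ j, c ≠ j → G.mult c j ≤ 2) (hD : G.deg c ≤ D) :
    (G.deg c).descFactorial 2 ≤ #(G.simpleNbrs c).offDiag + 4 * #(G.doubleNbrs c) * D := by
  rw [G.deg_eq_card_simpleNbrs_add c hloop hmax] at hD ⊢
  rw [offDiag_card]
  exact Nat.descFactorial_two_add_le _ _ _ hD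

variable (P : Fin n → Prop) [DecidablePred P]

lemma sum_card_doubleNbrs_le (hloop : ∀ c, G.mult c c = 0) :
    ∑ c ∈ univ.filter P, #(G.doubleNbrs c) ≤
      #(univ.filter fun p : Fin n × Fin n =>
        p.1 ≠ p.2 ∧ G.mult p.1 p.2 = 2 ∧ (P p.1 ∨ P p.2)) := by
  rw [← card_sigma]
  refine card_le_card_of_injOn (fun x => (x.1, x.2)) ?_ ?_
  · rintro ⟨c, j⟩ hx
    simp only [coe_sigma, Set.mem_sigma_iff, coe_filter, doubleNbrs, mem_univ, true_and,
      Set.mem_ofPred_eq] at hx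
    refine mem_filter.2 ⟨mem_univ _, fun hcj => ?_, hx.2, Or.inl hx.1⟩
    simp only at hcj
    simp [hcj, hloop] at hx
  · rintro ⟨c, j⟩ - ⟨c', j'⟩ - he
    simp_all

/-- The triple `(c, x, y)` stands for the ordered two-star `x c y` with centre `c`. -/
def simpleTwoStars : Finset (Fin n × Fin n × Fin n) :=
  univ.filter fun t => P t.1 ∧ G.Simple t.1 t.2.1 ∧ G.Simple t.1 t.2.2 ∧ t.2.1 ≠ t.2.2

lemma card_simpleTwoStars :
    #(G.simpleTwoStars P) = ∑ c ∈ univ.filter P, #(G.simpleNbrs c).offDiag := by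
  rw [← card_sigma]
  refine card_nbij' (fun t => ⟨t.1, t.2⟩) (fun x => (x.1, x.2)) ?_ ?_ ?_ ?_
  · intro t ht
    simp_all [simpleTwoStars, simpleNbrs]
  · intro x hx
    simp_all [simpleTwoStars, simpleNbrs]
  · intro t _; rfl
  · intro x _; rfl

lemma sum_descFactorial_deg_le {D : ℕ} (hloop : ∀ c, G.mult c c = 0)
    (hmax : ∀ i j, i ≠ j → G.mult i j ≤ 2) (hD : ∀ c, P c → G.deg c ≤ D) :
    ∑ c ∈ univ.filter P, (G.deg c).descFactorial 2 ≤ #(G.simpleTwoStars P) +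
      4 * D * #(univ.filter fun p : Fin n × Fin n =>
        p.1 ≠ p.2 ∧ G.mult p.1 p.2 = 2 ∧ (P p.1 ∨ P p.2)) := by
  calc ∑ c ∈ univ.filter P, (G.deg c).descFactorial 2
      ≤ ∑ c ∈ univ.filter P, (#(G.simpleNbrs c).offDiag + 4 * D * #(G.doubleNbrs c)) :=
        sum_le_sum fun c hc => by
          rw [mul_right_comm]
          exact G.descFactorial_deg_le (hloop c) (hmax c) (hD c (mem_filter.1 hc).2)
    _ = #(G.simpleTwoStars P) + 4 * D * ∑ c ∈ univ.filter P, #(G.doubleNbrs c) := by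
        rw [sum_add_distrib, card_simpleTwoStars, mul_sum]
    _ ≤ _ := by grw [G.sum_card_doubleNbrs_le P hloop]

lemma card_simpleTwoStars_filter_fst_le {D : ℕ} (hD : ∀ c, P c → G.deg c ≤ D) (v : Fin n) :
    #((G.simpleTwoStars P).filter (·.1 = v)) ≤ D ^ 2 := by
  by_cases hv : P v
  · calc #((G.simpleTwoStars P).filter (·.1 = v)) ≤ #(G.simpleNbrs v ×ˢ G.simpleNbrs v) := by
          refine card_le_card_of_injOn (·.2) ?_ ?_
          · rintro ⟨c, x, y⟩ ht
            simp only [simpleTwoStars, coe_filter, mem_filter, mem_univ, true_and,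
              Set.mem_ofPred_eq] at ht
            obtain ⟨⟨-, hx, hy, -⟩, rfl⟩ := ht
            simp [simpleNbrs, hx, hy]
          · rintro ⟨c, x, y⟩ ht ⟨c', x', y'⟩ ht' he
            simp_all [simpleTwoStars]
      _ ≤ G.deg v ^ 2 := by
          rw [card_product, ← sq]
          exact Nat.pow_le_pow_left (G.card_simpleNbrs_le_deg v) 2
      _ ≤ D ^ 2 := Nat.pow_le_pow_left (hD v hv) 2
  · rw [card_eq_zero.2]
    · exact Nat.zero_le _
    · exact filter_eq_empty_iff.2 fun t ht he => hv (he ▸ (mem_filter.1 ht).2.1)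

lemma card_simpleTwoStars_filter_snd_le (w : Fin n) :
    #((G.simpleTwoStars P).filter (·.2.1 = w)) ≤
      ∑ c ∈ univ.filter (fun c => P c ∧ G.Simple c w), G.deg c :=
  calc #((G.simpleTwoStars P).filter (·.2.1 = w))
      ≤ #((univ.filter (fun c => P c ∧ G.Simple c w)).sigma G.simpleNbrs) := by
        refine card_le_card_of_injOn (fun t => ⟨t.1, t.2.2⟩) ?_ ?_
        · rintro ⟨c, x, y⟩ ht
          simp only [simpleTwoStars, coe_filter, mem_filter, mem_univ, true_and,
            Set.mem_ofPred_eq] at ht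
          obtain ⟨⟨hc, hx, hy, -⟩, rfl⟩ := ht
          simp [simpleNbrs, hc, hx, hy]
        · rintro ⟨c, x, y⟩ ht ⟨c', x', y'⟩ ht' he
          simp_all [simpleTwoStars]
    _ ≤ _ := by
        rw [card_sigma]
        exact sum_le_sum fun c _ => G.card_simpleNbrs_le_deg c

lemma card_simpleTwoStars_filter_snd_snd (w : Fin n) :
    #((G.simpleTwoStars P).filter (·.2.2 = w)) = #((G.simpleTwoStars P).filter (·.2.1 = w)) :=
  card_equiv ((Equiv.refl _).prodCongr (Equiv.prodComm _ _)) fun ⟨c, x, y⟩ => by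
    simp only [simpleTwoStars, mem_filter, mem_univ, true_and]
    exact ⟨fun ⟨⟨hc, hx, hy, hxy⟩, hy'⟩ => ⟨⟨hc, hy, hx, hxy.symm⟩, hy'⟩,
      fun ⟨⟨hc, hy, hx, hyx⟩, hy'⟩ => ⟨⟨hc, hx, hy, hyx.symm⟩, hy'⟩⟩

lemma card_simpleTwoStars_le_card_filter_avoid_add {D B : ℕ} (hD : ∀ c, P c → G.deg c ≤ D)
    (hB : ∀ w, ∑ c ∈ univ.filter (fun c => P c ∧ G.Simple c w), G.deg c ≤ B)
    (V : Finset (Fin n)) :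
    #(G.simpleTwoStars P) ≤
      #((G.simpleTwoStars P).filter fun t => t.1 ∉ V ∧ t.2.1 ∉ V ∧ t.2.2 ∉ V) +
        #V * (D ^ 2 + 2 * B) := by
  set S := G.simpleTwoStars P
  have hmeet : S.filter (fun t => ¬(t.1 ∉ V ∧ t.2.1 ∉ V ∧ t.2.2 ∉ V)) ⊆
      V.biUnion fun v =>
        S.filter (·.1 = v) ∪ S.filter (·.2.1 = v) ∪ S.filter (·.2.2 = v) := by
    rintro ⟨c, x, y⟩ ht
    simp only [mem_filter, not_and_or, not_not] at ht
    obtain ⟨ht, hc | hx | hy⟩ := ht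
    exacts [mem_biUnion.2 ⟨c, hc, by simp [ht]⟩, mem_biUnion.2 ⟨x, hx, by simp [ht]⟩,
      mem_biUnion.2 ⟨y, hy, by simp [ht]⟩]
  have hcard (v : Fin n) :
      #(S.filter (·.1 = v) ∪ S.filter (·.2.1 = v) ∪ S.filter (·.2.2 = v)) ≤
        D ^ 2 + 2 * B := by
    have h1 := G.card_simpleTwoStars_filter_fst_le P hD v
    have h2 := (G.card_simpleTwoStars_filter_snd_le P v).trans (hB v)
    have h3 := G.card_simpleTwoStars_filter_snd_snd P v
    grind [card_union_le]
  calc #S = #(S.filter fun t => t.1 ∉ V ∧ t.2.1 ∉ V ∧ t.2.2 ∉ V) +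
        #(S.filter fun t => ¬(t.1 ∉ V ∧ t.2.1 ∉ V ∧ t.2.2 ∉ V)) :=
        (card_filter_add_card_filter_not _).symm
    _ ≤ _ := add_le_add_right
        ((card_le_card hmeet).trans (card_biUnion_le_card_mul _ _ _ fun v _ => hcard v)) _

end Multigraph

section DegreeSequence

variable {n : ℕ} {d : Fin n → ℕ}

lemma dExt_val (d : Fin n → ℕ) (i : Fin n) : dExt n d i = d i := by
  simp [dExt]

lemma antitone_dExt (hd : Antitone d) : Antitone (dExt n d) := by
  intro i j hij
  unfold dExt
  split_ifs with hj hi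
  · exact hd (Fin.mk_le_mk.2 hij)
  · omega
  all_goals exact Nat.zero_le _

lemma sum_le_sum_range_dExt (hd : Antitone d) {h k : ℕ} (A : Finset (Fin n))
    (hA : ∀ a ∈ A, h ≤ a.val) (hk : #A ≤ k) :
    ∑ a ∈ A, d a ≤ ∑ j ∈ range k, dExt n d (h + j) :=
  calc ∑ a ∈ A, d a = ∑ a ∈ A.map Fin.valEmbedding, dExt n d a := by simp [dExt_val]
    _ ≤ ∑ j ∈ range #A, dExt n d (h + j) := by
        simpa using sum_le_sum_range_of_antitone (antitone_dExt hd) (A.map Fin.valEmbedding)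
          fun a ha => by obtain ⟨b, hb, rfl⟩ := mem_map.1 ha; exact hA b hb
    _ ≤ _ := sum_le_sum_of_subset (range_subset_range.2 hk)

lemma deg_le_dExt {G : Multigraph n} (hdeg : ∀ i, G.deg i = d i) (hd : Antitone d) {k : ℕ}
    {c : Fin n} (hc : k ≤ c.val) : G.deg c ≤ dExt n d k :=
  (hdeg c).trans_le (dExt_val d c ▸ antitone_dExt hd hc)

lemma sum_deg_filter_simple_le {G : Multigraph n} (hdeg : ∀ i, G.deg i = d i) (hd : Antitone d)
    (h : ℕ) (w : Fin n) :
    ∑ c ∈ univ.filter (fun c : Fin n => h ≤ c.val ∧ G.Simple c w), G.deg c ≤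
      ∑ i ∈ range (dExt n d 0), dExt n d (h + i) := by
  simp only [hdeg]
  refine sum_le_sum_range_dExt hd _ (fun c hc => (mem_filter.1 hc).2.1) ?_
  calc #(univ.filter (fun c : Fin n => h ≤ c.val ∧ G.Simple c w)) ≤ #(G.simpleNbrs w) :=
        card_le_card fun c hc => by
          simpa [Multigraph.simpleNbrs] using (mem_filter.1 hc).2.2.symm
    _ ≤ G.deg w := G.card_simpleNbrs_le_deg w
    _ ≤ dExt n d 0 := deg_le_dExt hdeg hd (Nat.zero_le _)

end DegreeSequence

theorem stmt4_general (n h md : ℕ) (G : Multigraph n) (d : Fin n → ℕ)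
    (hdeg : ∀ i, G.deg i = d i)
    (hsorted : ∀ i j : Fin n, i ≤ j → d j ≤ d i)
    (hdouble : (Finset.univ.filter (fun p : Fin n × Fin n =>
        p.1 ≠ p.2 ∧ G.mult p.1 p.2 = 2 ∧ (h ≤ p.1.val ∨ h ≤ p.2.val))).card = 2 * md)
    (hnoloop : ∀ i : Fin n, G.mult i i = 0)
    (hmax : ∀ i j : Fin n, i ≠ j → G.mult i j ≤ 2)
    -- a fixed simple two-star v₁v₃v₅
    (v1 v3 v5 : Fin n) :
    ((∑ i ∈ Finset.univ.filter (fun i : Fin n => h ≤ i.val),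
        Nat.descFactorial (d i) 2 : ℕ) : ℤ)
      - 8 * (md : ℤ) * (dExt n d (h - 1) : ℤ)
      - 6 * ((∑ i ∈ Finset.range (dExt n d 0), dExt n d (h + i) : ℕ) : ℤ)
      - 3 * (dExt n d (h - 1) : ℤ) ^ 2
    ≤ ((Finset.univ.filter (fun t : Fin n × Fin n × Fin n =>
        h ≤ t.1.val ∧ G.Simple t.1 t.2.1 ∧ G.Simple t.1 t.2.2 ∧ t.2.1 ≠ t.2.2 ∧
        t.1 ≠ v1 ∧ t.1 ≠ v3 ∧ t.1 ≠ v5 ∧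
        t.2.1 ≠ v1 ∧ t.2.1 ≠ v3 ∧ t.2.1 ≠ v5 ∧
        t.2.2 ≠ v1 ∧ t.2.2 ≠ v3 ∧ t.2.2 ≠ v5)).card : ℤ) := by
  have hanti : Antitone d := fun i j hij => hsorted i j hij
  have hlight (c : Fin n) (hc : h ≤ c.val) : G.deg c ≤ dExt n d (h - 1) :=
    deg_le_dExt hdeg hanti (by omega)
  have hleaf := sum_deg_filter_simple_le hdeg hanti h
  set D := dExt n d (h - 1)
  set B := ∑ i ∈ range (dExt n d 0), dExt n d (h + i)
  set V : Finset (Fin n) := {v1, v3, v5}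
  have hstars := G.sum_descFactorial_deg_le _ hnoloop hmax hlight
  have havoid := G.card_simpleTwoStars_le_card_filter_avoid_add _ hlight hleaf V
  set avoid := (G.simpleTwoStars fun c : Fin n => h ≤ c.val).filter
    fun t => t.1 ∉ V ∧ t.2.1 ∉ V ∧ t.2.2 ∉ V
  have hV := Nat.mul_le_mul_right (D ^ 2 + 2 * B) (show #V ≤ 3 from card_le_three)
  rw [hdouble] at hstars
  simp only [hdeg] at hstars
  refine le_trans ?_ (Nat.cast_le.2 (card_le_card (s := avoid) fun t ht => ?_))
  · rw [sub_sub, sub_sub, sub_le_iff_le_add]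
    exact_mod_cast (show
      ∑ i ∈ univ.filter (fun i : Fin n => h ≤ i.val), (d i).descFactorial 2 ≤
      #avoid + (8 * md * D + (6 * B + 3 * D ^ 2)) by linarith)
  · simp only [avoid, Multigraph.simpleTwoStars, V, mem_filter, mem_insert,
      mem_singleton] at ht ⊢
    tauto

/-- lower bound on the number of light simple ordered two-stars
node-disjoint from a fixed simple two-star `v₁v₃v₅`. -/
theorem stmt4 (n h md : ℕ) (G : Multigraph n) (d : Fin n → ℕ)
    (hdeg : ∀ i, G.deg i = d i)
    (hsorted : ∀ i j : Fin n, i ≤ j → d j ≤ d i)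
    (hh1 : 1 ≤ h) (hhn : h ≤ n)
    (hdouble : (Finset.univ.filter (fun p : Fin n × Fin n =>
        p.1 ≠ p.2 ∧ G.mult p.1 p.2 = 2 ∧ (h ≤ p.1.val ∨ h ≤ p.2.val))).card = 2 * md)
    (hnoloop : ∀ i : Fin n, G.mult i i = 0)
    (hmax : ∀ i j : Fin n, i ≠ j → G.mult i j ≤ 2)
    (hmultilight : ∀ i j : Fin n, i ≠ j → 2 ≤ G.mult i j → (h ≤ i.val ∨ h ≤ j.val))
    -- a fixed simple two-star v₁v₃v₅
    (v1 v3 v5 : Fin n) (hs13 : G.Simple v1 v3) (hs15 : G.Simple v1 v5) (hne35 : v3 ≠ v5) :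
    ((∑ i ∈ Finset.univ.filter (fun i : Fin n => h ≤ i.val),
        Nat.descFactorial (d i) 2 : ℕ) : ℤ)
      - 8 * (md : ℤ) * (dExt n d (h - 1) : ℤ)
      - 6 * ((∑ i ∈ Finset.range (dExt n d 0), dExt n d (h + i) : ℕ) : ℤ)
      - 3 * (dExt n d (h - 1) : ℤ) ^ 2
    ≤ ((Finset.univ.filter (fun t : Fin n × Fin n × Fin n =>
        h ≤ t.1.val ∧ G.Simple t.1 t.2.1 ∧ G.Simple t.1 t.2.2 ∧ t.2.1 ≠ t.2.2 ∧
        t.1 ≠ v1 ∧ t.1 ≠ v3 ∧ t.1 ≠ v5 ∧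
        t.2.1 ≠ v1 ∧ t.2.1 ≠ v3 ∧ t.2.1 ≠ v5 ∧
        t.2.2 ≠ v1 ∧ t.2.2 ≠ v3 ∧ t.2.2 ≠ v5)).card : ℤ) :=
  stmt4_general n h md G d hdeg hsorted hdouble hnoloop hmax v1 v3 v5
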